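/- Let m be a positive integer with prime factorization m = p_1^{α_1} p_2^{α_2} ⋯ p_r^{α_r}, where p_1, …, p_r are r ≥ 2 distinct primes. Then there exists a constant c > 0 (depending only on m) such that for every n ≥ 1 there is a multilinear polynomial P' with integer coefficients in n variables, of total degree at most c · n^{1/r}, satisfying: (i) P'(0, …, 0) ≡ 0 (mod m); (ii) P'(x) ≢ 0 (mod m) for every x ∈ {0,1}^n with x ≠ (0, …, 0); and (iii) for every x ∈ {0,1}^n and every i ∈ {1, …, r}, either P'(x) ≡ 0 (mod p_i^{α_i}) or P'(x) ≡ 1 (mod p_i^{α_i}). -/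

import Mathlib

/-!
For each prime power `q i = p i ^ α i` take `t i` with `p i ^ (t i * r) ≤ n < p i ^ ((t i + 1) * r)`.
By Lucas' theorem `c.choose (p ^ j)` is the `j`-th base-`p` digit of `c` modulo `p`, so
`D_i = 1 - ∏_{j ≤ t i} (1 - e_{p^j}^(p - 1))`, evaluated at a 0-1 point of Hamming weight `c`, vanishes
for `c = 0` and is `≡ 1 (mod p i)` unless `p i ^ (t i + 1) ∣ c`. By Euler, `D_i ^ φ(q i)` is then
`≡ 0` or `1 (mod q i)`, and `≡ 1` whenever `p i ∤ D_i`. Gluing these with CRT idempotents gives a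
symmetric polynomial that is `≡ D_i ^ φ(q i) (mod q i)` for every `i`; since `∏ i, p i ^ (t i + 1) > n`,
every weight `1 ≤ c ≤ n` is not divisible by some `p i ^ (t i + 1)`. The degree is at most
`∑ φ(q i) p i ^ (t i + 1) = O(n^(1/r))`, and multilinearizing (`X^k ↦ X`) keeps the values at
0-1 points.
-/

/-- A multilinear polynomial: every variable occurs to degree at most 1 in every monomial. -/
def IsMultilinear {n : ℕ} (P : MvPolynomial (Fin n) ℤ) : Prop :=
  ∀ d ∈ P.support, ∀ i, d i ≤ 1

open Finset Function MvPolynomial Nat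

namespace MvPolynomial

variable {σ R : Type*} [CommSemiring R]

noncomputable def multilinearize (P : MvPolynomial σ R) : MvPolynomial σ R :=
  ∑ d ∈ P.support, monomial (d.mapRange (min · 1) (by simp)) (coeff d P)

lemma isMultilinear_multilinearize {n : ℕ} (P : MvPolynomial (Fin n) ℤ) :
    IsMultilinear (multilinearize P) := by
  intro d hd i
  obtain ⟨e, -, he⟩ := Finset.mem_biUnion.mp (support_sum hd)
  rw [Finset.mem_singleton.mp (support_monomial_subset he)]
  exact min_le_right _ _

lemma totalDegree_multilinearize_le (P : MvPolynomial σ R) :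
    (multilinearize P).totalDegree ≤ P.totalDegree := by
  refine (totalDegree_finsetSum _ _).trans (Finset.sup_le fun d hd => ?_)
  refine (totalDegree_monomial_le _ _).trans (le_trans ?_ (le_totalDegree hd))
  rw [Finsupp.sum_mapRange_index (fun _ => rfl)]
  exact Finset.sum_le_sum fun i _ => min_le_left _ _

lemma eval_multilinearize {x : σ → R} (hx : ∀ i, IsIdempotentElem (x i))
    (P : MvPolynomial σ R) : eval x (multilinearize P) = eval x P := by
  conv_rhs => rw [P.as_sum]
  simp only [multilinearize, map_sum, eval_monomial]
  refine Finset.sum_congr rfl fun d _ => congrArg _ ?_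
  rw [Finsupp.prod_mapRange_index (fun _ => pow_zero _)]
  refine Finsupp.prod_congr fun i hi => ?_
  rw [min_eq_right (Nat.one_le_iff_ne_zero.mpr (Finsupp.mem_support_iff.mp hi)), pow_one,
    (hx i).pow_eq (Finsupp.mem_support_iff.mp hi)]

lemma isHomogeneous_esymm (σ R : Type*) [CommSemiring R] [Fintype σ] (s : ℕ) :
    (esymm σ R s).IsHomogeneous s := by
  refine IsHomogeneous.sum _ _ _ fun t ht => ?_
  convert IsHomogeneous.prod t _ (fun _ => 1) fun i _ => isHomogeneous_X R i
  simp [(mem_powersetCard.mp ht).2]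

lemma eval_esymm_of_forall_eq_zero_or_eq_one [Fintype σ] [DecidableEq R] {x : σ → R}
    (hx : ∀ i, x i = 0 ∨ x i = 1) (s : ℕ) :
    eval x (esymm σ R s) = ((#{i | x i = 1}).choose s : ℕ) := by
  classical
  set A : Finset σ := {i | x i = 1}
  have hprod (t : Finset σ) : ∏ i ∈ t, x i = if t ⊆ A then 1 else 0 := by
    split_ifs with h
    · exact Finset.prod_eq_one fun i hi => (Finset.mem_filter.mp (h hi)).2
    · obtain ⟨i, hit, hi⟩ := Finset.not_subset.mp h
      exact Finset.prod_eq_zero hit ((hx i).resolve_right (by simpa [A] using hi))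
  simp only [esymm, map_sum, map_prod, eval_X, hprod]
  rw [Finset.sum_boole, ← Finset.card_powersetCard]
  congr 2
  ext t
  simp only [Finset.mem_filter, Finset.mem_powersetCard, Finset.subset_univ, true_and]
  tauto

end MvPolynomial

lemma Finset.card_filter_eq_one_ne_zero {σ R : Type*} [Fintype σ] [Zero R] [One R]
    [DecidableEq R] {x : σ → R} (hx : ∀ i, x i = 0 ∨ x i = 1) (hx0 : x ≠ 0) :
    #{i | x i = 1} ≠ 0 := by
  obtain ⟨i, hi⟩ := Function.ne_iff.mp hx0
  exact card_ne_zero.mpr ⟨i, mem_filter.mpr ⟨mem_univ i, (hx i).resolve_left hi⟩⟩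

lemma Nat.le_totient_prime_pow {p : ℕ} (hp : p.Prime) (a : ℕ) : a ≤ φ (p ^ a) := by
  rcases a.eq_zero_or_pos with rfl | ha
  · exact Nat.zero_le _
  rw [Nat.totient_prime_pow hp ha]
  calc a = a - 1 + 1 := (Nat.sub_add_cancel ha).symm
    _ ≤ p ^ (a - 1) := Nat.lt_pow_self hp.one_lt
    _ ≤ p ^ (a - 1) * (p - 1) := Nat.le_mul_of_pos_right _ (Nat.sub_pos_of_lt hp.one_lt)

namespace Int

lemma prime_pow_dvd_pow_totient_sub_one {p : ℕ} (hp : p.Prime) (a : ℕ) {w : ℤ}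
    (hw : ¬ (p : ℤ) ∣ w) : (p : ℤ) ^ a ∣ w ^ φ (p ^ a) - 1 := by
  have hunit : IsUnit (w : ZMod (p ^ a)) := by
    rw [ZMod.coe_int_isUnit_iff_isCoprime, Nat.cast_pow]
    exact ((Nat.prime_iff_prime_int.mp hp).coprime_iff_not_dvd.mpr hw).pow_left
  have h := congrArg Units.val (ZMod.pow_totient hunit.unit)
  rw [Units.val_pow_eq_pow_val, IsUnit.unit_spec, Units.val_one] at h
  exact_mod_cast (ZMod.intCast_zmod_eq_zero_iff_dvd _ (p ^ a)).mp (by push_cast; rw [h, sub_self])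

lemma prime_pow_dvd_pow_totient {p : ℕ} (hp : p.Prime) (a : ℕ) {w : ℤ}
    (hw : (p : ℤ) ∣ w) : (p : ℤ) ^ a ∣ w ^ φ (p ^ a) :=
  (pow_dvd_pow_of_dvd hw a).trans (pow_dvd_pow w (le_totient_prime_pow hp a))

lemma prime_pow_dvd_pow_totient_or {p : ℕ} (hp : p.Prime) (a : ℕ) (w : ℤ) :
    (p : ℤ) ^ a ∣ w ^ φ (p ^ a) ∨ (p : ℤ) ^ a ∣ w ^ φ (p ^ a) - 1 :=
  (em _).imp (prime_pow_dvd_pow_totient hp a) (prime_pow_dvd_pow_totient_sub_one hp a)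

end Int

lemma Nat.Prime.not_dvd_choose_ordProj {p c : ℕ} (hp : p.Prime) (hc : c ≠ 0) :
    ¬ p ∣ c.choose (p ^ c.factorization p) := by
  have := Fact.mk hp
  have h := Choose.choose_pow_mul_pow_mul_modEq_choose_nat (p := p) (k := c.factorization p)
    (a := c / p ^ c.factorization p) (b := 1)
  rw [mul_one, Nat.ordProj_mul_ordCompl_eq_self, Nat.choose_one_right] at h
  rw [Nat.dvd_iff_mod_eq_zero, h, ← Nat.dvd_iff_mod_eq_zero]
  exact Nat.not_dvd_ordCompl hp hc

lemma pairwise_isCoprime_prime_pow {ι : Type*} {p : ι → ℕ} (hp : ∀ i, (p i).Prime)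
    (hinj : Injective p) (e : ι → ℕ) :
    Pairwise (IsCoprime on fun i => (p i : ℤ) ^ e i) := fun i j hij =>
  (Nat.isCoprime_iff_coprime.mpr ((Nat.coprime_primes (hp i) (hp j)).mpr (hinj.ne hij))).pow

lemma exists_not_prime_pow_dvd_of_lt_prod {ι : Type*} [Fintype ι] {p : ι → ℕ}
    (hp : ∀ i, (p i).Prime) (hinj : Injective p) (e : ι → ℕ) {c : ℕ} (hc : c ≠ 0)
    (hce : c < ∏ i, p i ^ e i) : ∃ i, ¬ p i ^ e i ∣ c := by
  by_contra! h
  have hdvd : ((∏ i, p i ^ e i : ℕ) : ℤ) ∣ c := by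
    push_cast
    exact Fintype.prod_dvd_of_coprime (pairwise_isCoprime_prime_pow hp hinj e)
      fun i => by exact_mod_cast h i
  exact hce.not_ge (Nat.le_of_dvd (Nat.pos_of_ne_zero hc) (Int.natCast_dvd_natCast.mp hdvd))

lemma exists_forall_dvd_sum_mul_sub {ι R : Type*} [Fintype ι] [CommRing R] {q : ι → R}
    (hq : Pairwise (IsCoprime on q)) :
    ∃ u : ι → R, ∀ (w : ι → R) (i : ι), q i ∣ ∑ j, u j * w j - w i := by
  classical
  have hidem (i : ι) : ∃ v, q i ∣ v - 1 ∧ ∀ j ≠ i, q j ∣ v := by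
    obtain ⟨a, b, hab⟩ : IsCoprime (∏ j ∈ univ.erase i, q j) (q i) :=
      IsCoprime.prod_left fun j hj => hq (ne_of_mem_erase hj)
    refine ⟨a * ∏ j ∈ univ.erase i, q j, ⟨-b, by linear_combination hab⟩, fun j hj => ?_⟩
    exact (dvd_prod_of_mem q (mem_erase.mpr ⟨hj, mem_univ j⟩)).mul_left a
  choose u hu_one hu_zero using hidem
  refine ⟨u, fun w i => ?_⟩
  rw [← add_sum_erase _ _ (mem_univ i), add_sub_right_comm, ← sub_one_mul]
  exact dvd_add ((hu_one i).mul_right _)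
    (dvd_sum fun j hj => ((hu_zero j) i (ne_of_mem_erase hj).symm).mul_right _)

def digitIndicator {R : Type*} [CommRing R] (p t : ℕ) (e : ℕ → R) : R :=
  1 - ∏ j ∈ range (t + 1), (1 - e (p ^ j) ^ (p - 1))

lemma map_digitIndicator {R S : Type*} [CommRing R] [CommRing S] (f : R →+* S) (p t : ℕ)
    (e : ℕ → R) : f (digitIndicator p t e) = digitIndicator p t (f ∘ e) := by
  simp [digitIndicator]

lemma digitIndicator_choose_zero {p : ℕ} (hp : 1 < p) (t : ℕ) :
    digitIndicator p t (fun s => ((0 : ℕ).choose s : ℤ)) = 0 := by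
  have hchoose (j : ℕ) : (0 : ℕ).choose (p ^ j) = 0 :=
    Nat.choose_eq_zero_of_lt (Nat.pow_pos (by omega))
  simp [digitIndicator, hchoose, Nat.sub_ne_zero_of_lt hp]

lemma prime_dvd_digitIndicator_choose_sub_one {p t c : ℕ} (hp : p.Prime) (hc : c ≠ 0)
    (hct : ¬ p ^ (t + 1) ∣ c) :
    (p : ℤ) ∣ digitIndicator p t (fun s => (c.choose s : ℤ)) - 1 := by
  have hv : c.factorization p < t + 1 := by
    by_contra! h
    exact hct ((Nat.pow_dvd_pow p h).trans (Nat.ordProj_dvd c p))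
  have hfermat := Int.prime_pow_dvd_pow_totient_sub_one hp 1
    (w := (c.choose (p ^ c.factorization p) : ℤ)) (by exact_mod_cast hp.not_dvd_choose_ordProj hc)
  rw [pow_one, pow_one, Nat.totient_prime hp] at hfermat
  rw [digitIndicator, sub_sub_cancel_left, dvd_neg]
  exact (dvd_sub_comm.mp hfermat).trans (dvd_prod_of_mem _ (mem_range.mpr hv))

lemma totalDegree_digitIndicator_le {σ R : Type*} [CommRing R] {p : ℕ} (hp : 0 < p) (t : ℕ)
    {e : ℕ → MvPolynomial σ R} (he : ∀ s, (e s).totalDegree ≤ s) :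
    (digitIndicator p t e).totalDegree ≤ p ^ (t + 1) := by
  have hfactor (j : ℕ) : (1 - e (p ^ j) ^ (p - 1)).totalDegree ≤ p ^ j * (p - 1) := by
    refine (totalDegree_sub _ _).trans (max_le (by simp) ?_)
    exact (totalDegree_pow _ _).trans (by rw [mul_comm]; exact Nat.mul_le_mul_right _ (he _))
  calc (digitIndicator p t e).totalDegree
      ≤ (∏ j ∈ range (t + 1), (1 - e (p ^ j) ^ (p - 1))).totalDegree :=
        (totalDegree_sub _ _).trans (max_le (by simp) le_rfl)
    _ ≤ ∑ j ∈ range (t + 1), p ^ j * (p - 1) :=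
        (totalDegree_finsetProd _ _).trans (sum_le_sum fun j _ => hfactor j)
    _ = p ^ (t + 1) - 1 := by rw [← sum_mul, geom_sum_mul_of_one_le hp]
    _ ≤ p ^ (t + 1) := Nat.sub_le _ _

section crtCombination

variable {ι : Type*} [Fintype ι]

def crtCombination {R : Type*} [CommRing R] (p α t : ι → ℕ) (u : ι → R) (e : ℕ → R) : R :=
  ∑ i, u i * digitIndicator (p i) (t i) e ^ φ (p i ^ α i)

lemma map_crtCombination {R S : Type*} [CommRing R] [CommRing S] (f : R →+* S)
    (p α t : ι → ℕ) (u : ι → R) (e : ℕ → R) :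
    f (crtCombination p α t u e) = crtCombination p α t (f ∘ u) (f ∘ e) := by
  simp [crtCombination, map_digitIndicator]

lemma totalDegree_crtCombination_le {σ R : Type*} [CommRing R] {p : ι → ℕ} (hp : ∀ i, 0 < p i)
    (α t : ι → ℕ) (u : ι → R) {e : ℕ → MvPolynomial σ R} (he : ∀ s, (e s).totalDegree ≤ s) :
    (crtCombination p α t (fun i => C (u i)) e).totalDegree ≤
      ∑ i, φ (p i ^ α i) * p i ^ (t i + 1) := by
  refine (totalDegree_finsetSum _ _).trans (Finset.sup_le fun i _ => ?_)
  refine (totalDegree_mul _ _).trans (le_trans ?_ (single_le_sum (fun j _ => Nat.zero_le _)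
    (mem_univ i)))
  rw [totalDegree_C, zero_add]
  exact (totalDegree_pow _ _).trans
    (Nat.mul_le_mul_left _ (totalDegree_digitIndicator_le (hp i) _ he))

lemma eval_crtCombination_esymm {σ R : Type*} [Fintype σ] [CommRing R] [DecidableEq R]
    (p α t : ι → ℕ) (u : ι → R) {x : σ → R} (hx : ∀ i, x i = 0 ∨ x i = 1) :
    eval x (crtCombination p α t (fun i => C (u i)) (esymm σ R)) =
      crtCombination p α t u (fun s => ((#{i | x i = 1}).choose s : R)) := by
  rw [map_crtCombination]
  congr 1
  · ext i; simp
  · ext s; simp [eval_esymm_of_forall_eq_zero_or_eq_one hx]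

variable {p α t : ι → ℕ} {u : ι → ℤ}

lemma crtCombination_choose_zero (hp : ∀ i, 1 < p i) :
    crtCombination p α t u (fun s => ((0 : ℕ).choose s : ℤ)) = 0 := by
  have hφ (i : ι) : φ (p i ^ α i) ≠ 0 :=
    (Nat.totient_pos.mpr (Nat.pow_pos (Nat.zero_lt_of_lt (hp i)))).ne'
  simp [crtCombination, digitIndicator_choose_zero (hp _), hφ]

lemma prime_pow_dvd_crtCombination_or (hp : ∀ i, (p i).Prime)
    (hu : ∀ (w : ι → ℤ) i, (p i : ℤ) ^ α i ∣ ∑ j, u j * w j - w i) (e : ℕ → ℤ) (i : ι) :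
    (p i : ℤ) ^ α i ∣ crtCombination p α t u e ∨
      (p i : ℤ) ^ α i ∣ crtCombination p α t u e - 1 := by
  have h := hu (fun j => digitIndicator (p j) (t j) e ^ φ (p j ^ α j)) i
  refine (Int.prime_pow_dvd_pow_totient_or (hp i) (α i) (digitIndicator (p i) (t i) e)).imp
    (fun h' => ?_) (fun h' => ?_)
  · simpa [crtCombination] using dvd_add h h'
  · simpa [crtCombination] using dvd_add h h'

lemma prime_pow_dvd_crtCombination_choose_sub_one (hp : ∀ i, (p i).Prime)
    (hu : ∀ (w : ι → ℤ) i, (p i : ℤ) ^ α i ∣ ∑ j, u j * w j - w i) {c : ℕ} (hc : c ≠ 0)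
    {i : ι} (hci : ¬ p i ^ (t i + 1) ∣ c) :
    (p i : ℤ) ^ α i ∣ crtCombination p α t u (fun s => (c.choose s : ℤ)) - 1 := by
  have hunit := prime_dvd_digitIndicator_choose_sub_one (hp i) hc hci
  have hcoprime : ¬ (p i : ℤ) ∣ digitIndicator (p i) (t i) (fun s => (c.choose s : ℤ)) := by
    intro h
    exact (Nat.prime_iff_prime_int.mp (hp i)).not_dvd_one (by simpa using dvd_sub h hunit)
  have h := hu (fun j => digitIndicator (p j) (t j) (fun s => (c.choose s : ℤ)) ^ φ (p j ^ α j)) i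
  simpa [crtCombination] using
    dvd_add h (Int.prime_pow_dvd_pow_totient_sub_one (hp i) (α i) hcoprime)

lemma not_prod_dvd_crtCombination_choose (hp : ∀ i, (p i).Prime) (hinj : Injective p)
    (hα : ∀ i, 1 ≤ α i) (hu : ∀ (w : ι → ℤ) i, (p i : ℤ) ^ α i ∣ ∑ j, u j * w j - w i) {c : ℕ}
    (hc : c ≠ 0) (hct : c < ∏ i, p i ^ (t i + 1)) :
    ¬ (∏ j, (p j : ℤ) ^ α j) ∣ crtCombination p α t u (fun s => (c.choose s : ℤ)) := by
  intro h
  obtain ⟨i, hci⟩ := exists_not_prime_pow_dvd_of_lt_prod hp hinj _ hc hct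
  have hpq : (p i : ℤ) ∣ (p i : ℤ) ^ α i := dvd_pow_self _ (Nat.one_le_iff_ne_zero.mp (hα i))
  have h1 := hpq.trans (prime_pow_dvd_crtCombination_choose_sub_one hp hu hc hci)
  have h0 := hpq.trans ((dvd_prod_of_mem _ (mem_univ i)).trans h)
  exact (Nat.prime_iff_prime_int.mp (hp i)).not_dvd_one (by simpa using dvd_sub h0 h1)

end crtCombination

lemma lt_prod_pow_succ_log {ι : Type*} [Fintype ι] [Nonempty ι] {p : ι → ℕ}
    (hp : ∀ i, 1 < p i) (n : ℕ) :
    n < ∏ i, p i ^ (Nat.log (p i ^ Fintype.card ι) n + 1) := by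
  have hr : Fintype.card ι ≠ 0 := Fintype.card_ne_zero
  rw [← Nat.pow_lt_pow_iff_left hr, ← prod_pow]
  have hlog (i : ι) :
      n + 1 ≤ (p i ^ (Nat.log (p i ^ Fintype.card ι) n + 1)) ^ Fintype.card ι := by
    rw [← pow_mul, mul_comm, pow_mul]
    exact Nat.lt_pow_succ_log_self (Nat.one_lt_pow hr (hp i)) n
  calc n ^ Fintype.card ι < (n + 1) ^ Fintype.card ι := Nat.pow_lt_pow_left n.lt_succ_self hr
    _ = ∏ _i : ι, (n + 1) := by rw [prod_const, Finset.card_univ]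
    _ ≤ _ := prod_le_prod (fun _ _ => Nat.zero_le _) fun i _ => hlog i

lemma pow_log_pow_le_rpow (p : ℕ) {r n : ℕ} (hr : r ≠ 0) (hn : n ≠ 0) :
    (p : ℝ) ^ Nat.log (p ^ r) n ≤ (n : ℝ) ^ ((1 : ℝ) / r) := by
  have h : ((p : ℝ) ^ Nat.log (p ^ r) n) ^ r ≤ n := by
    rw [← pow_mul, mul_comm, pow_mul]
    exact_mod_cast Nat.pow_log_le_self _ hn
  calc (p : ℝ) ^ Nat.log (p ^ r) n = (((p : ℝ) ^ Nat.log (p ^ r) n) ^ r) ^ ((1 : ℝ) / r) := by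
        rw [one_div, Real.pow_rpow_inv_natCast (by positivity) hr]
    _ ≤ (n : ℝ) ^ ((1 : ℝ) / r) := Real.rpow_le_rpow (by positivity) h (by positivity)

lemma sum_mul_pow_succ_log_le {ι : Type*} [Fintype ι] (a p : ι → ℕ) {r n : ℕ} (hr : r ≠ 0)
    (hn : n ≠ 0) :
    ((∑ i, a i * p i ^ (Nat.log (p i ^ r) n + 1) : ℕ) : ℝ) ≤
      (∑ i, (a i * p i : ℝ)) * (n : ℝ) ^ ((1 : ℝ) / r) := by
  push_cast
  rw [sum_mul]
  refine sum_le_sum fun i _ => ?_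
  calc (a i : ℝ) * (p i : ℝ) ^ (Nat.log (p i ^ r) n + 1)
      = (a i * p i : ℝ) * (p i : ℝ) ^ Nat.log (p i ^ r) n := by ring
    _ ≤ (a i * p i : ℝ) * (n : ℝ) ^ ((1 : ℝ) / r) := by
      gcongr
      exact pow_log_pow_le_rpow (p i) hr hn

/-- If `m` has `r ≥ 2` distinct prime factors, then for every `n ≥ 1` there is an explicit
multilinear integer polynomial `P'` of degree `O(n^{1/r})` with `P'(0,…,0) ≡ 0 (mod m)`,
`P'(x) ≢ 0 (mod m)` for every other 0-1 vector `x`, and such that at every 0-1 vector `x`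
and every `i`, `P'(x) ≡ 0` or `1 (mod p_i^{α_i})`. -/
theorem or_strong_representation_composite
    (m r : ℕ) (p α : Fin r → ℕ)
    (hr : 2 ≤ r)
    (hp : ∀ i, (p i).Prime)
    (hinj : Function.Injective p)
    (hα : ∀ i, 1 ≤ α i)
    (hm : m = ∏ i, p i ^ α i) :
    ∃ c : ℝ, 0 < c ∧
      ∀ n : ℕ, 1 ≤ n →
        ∃ P' : MvPolynomial (Fin n) ℤ,
          IsMultilinear P' ∧
          (P'.totalDegree : ℝ) ≤ c * (n : ℝ) ^ ((1 : ℝ) / r) ∧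
          ((m : ℤ) ∣ MvPolynomial.eval (0 : Fin n → ℤ) P') ∧
          (∀ x : Fin n → ℤ, (∀ i, x i = 0 ∨ x i = 1) → x ≠ 0 →
            ¬ ((m : ℤ) ∣ MvPolynomial.eval x P')) ∧
          (∀ x : Fin n → ℤ, (∀ i, x i = 0 ∨ x i = 1) → ∀ i : Fin r,
            ((p i : ℤ) ^ (α i) ∣ MvPolynomial.eval x P') ∨
            ((p i : ℤ) ^ (α i) ∣ (MvPolynomial.eval x P' - 1))) := by
  have : NeZero r := ⟨by omega⟩
  obtain ⟨u, hu⟩ := exists_forall_dvd_sum_mul_sub (pairwise_isCoprime_prime_pow hp hinj α)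
  refine ⟨∑ i, (φ (p i ^ α i) * p i : ℝ), sum_pos (fun i _ => ?_) univ_nonempty, fun n hn => ?_⟩
  · exact mul_pos (by exact_mod_cast Nat.totient_pos.mpr (pow_pos (hp i).pos _))
      (by exact_mod_cast (hp i).pos)
  set t : Fin r → ℕ := fun i => Nat.log (p i ^ r) n
  set P := multilinearize (crtCombination p α t (fun i => C (u i)) (esymm (Fin n) ℤ))
  have heval (x : Fin n → ℤ) (hx : ∀ a, x a = 0 ∨ x a = 1) :
      eval x P = crtCombination p α t u (fun s => ((#{a | x a = 1}).choose s : ℤ)) := by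
    rw [eval_multilinearize (fun a => by rcases hx a with h | h <;> simp [h, IsIdempotentElem]),
      eval_crtCombination_esymm _ _ _ _ hx]
  have hm' : (m : ℤ) = ∏ i, (p i : ℤ) ^ α i := by exact_mod_cast hm
  refine ⟨P, isMultilinear_multilinearize _, ?_, ?_, fun x hx hx0 => ?_, fun x hx i => ?_⟩
  · calc (P.totalDegree : ℝ) ≤ ((∑ i, φ (p i ^ α i) * p i ^ (t i + 1) : ℕ) : ℝ) := by
          exact_mod_cast (totalDegree_multilinearize_le _).trans (totalDegree_crtCombination_le
            (fun i => (hp i).pos) α t u fun s => (isHomogeneous_esymm _ ℤ s).totalDegree_le)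
      _ ≤ _ := sum_mul_pow_succ_log_le _ p (by omega) (by omega)
  · rw [heval 0 fun _ => Or.inl rfl]
    simp [crtCombination_choose_zero fun i => (hp i).one_lt]
  · rw [heval x hx, hm']
    refine not_prod_dvd_crtCombination_choose hp hinj hα hu (card_filter_eq_one_ne_zero hx hx0) ?_
    exact ((card_filter_le _ _).trans_eq (card_fin n)).trans_lt
      (by simpa only [Fintype.card_fin] using lt_prod_pow_succ_log (fun i => (hp i).one_lt) n)
  · rw [heval x hx]
    exact prime_pow_dvd_crtCombination_or hp hu _ i
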